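/- arXiv:1904.01152 — 2 statements merged into one kernel-verified Lean document; each statement's English description precedes it below -/
import Mathlib

section
/- Let β, τ > 0 and let ω ∈ ℝ with |ω|τ > β. Then the Fourier transform of the Kaiser–Bessel window satisfies K̂_{β,τ}(ω) = (2τ/I₀(β)) · sin(√(ω²τ² − β²)) / √(ω²τ² − β²). In particular, for β = Sτ with S > 0 and ω = ℓ with |ℓ| > S, K̂_{Sτ,τ}(ℓ) = (2/I₀(Sτ)) · sin(τ√(ℓ² − S²)) / √(ℓ² − S²). -/
open Real MeasureTheory

/-- The modified Bessel function of the first kind of order zero,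
`I₀(z) := Σ_{k=0}^∞ (z/2)^{2k}/(k!)²`. -/
noncomputable def besselI0 (z : ℝ) : ℝ :=
  ∑' k : ℕ, (z / 2) ^ (2 * k) / ((Nat.factorial k : ℝ)) ^ 2

/-- The Kaiser–Bessel window `K_{β,τ}`. -/
noncomputable def kaiserBessel (β τ t : ℝ) : ℝ :=
  if |t| ≤ τ then besselI0 (β * Real.sqrt (1 - (t / τ) ^ 2)) / besselI0 β else 0

/-- The Fourier transform `Ŵ(ω) := ∫ W(t) e^{−ιωt} dt` of a real-valued function. -/
noncomputable def ftransform (W : ℝ → ℝ) (ω : ℝ) : ℂ :=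
  ∫ t : ℝ, (W t : ℂ) * Complex.exp (-Complex.I * ((ω * t : ℝ) : ℂ))

open scoped Nat
open Finset

/-! On `[-τ, τ]` the window is even, so after the substitution `t = τu` its transform is the real
integral `(τ / I₀(β)) ∫_{-1}^{1} I₀(β√(1 - u²)) cos(ωτu) du`. Expanding
`I₀(β√(1 - u²)) = Σ_k (β²/4)^k (1 - u²)^k / (k!)²` and the cosine into power series gives a double
series dominated uniformly on `[-1, 1]`, so it can be integrated termwise; the resulting moments
`∫_{-1}^{1} u^{2m} (1 - u²)^k du` are Beta integrals. Grouping the terms by `n = k + m`, the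
binomial theorem collapses the coefficients to `2 (β² - ω²τ²)^n / (2n + 1)!`, the series of
`2 sin x / x` at `x = √(ω²τ² - β²)`. -/

lemma besselI0_term_eq (z : ℝ) (k : ℕ) :
    (z / 2) ^ (2 * k) / (k ! : ℝ) ^ 2 = (z ^ 2 / 4) ^ k / (k ! : ℝ) ^ 2 := by
  rw [pow_mul]; ring

lemma hasSum_besselI0 (z : ℝ) :
    HasSum (fun k : ℕ => (z ^ 2 / 4) ^ k / (k ! : ℝ) ^ 2) (besselI0 z) := by
  have hsum : Summable fun k : ℕ => (z ^ 2 / 4) ^ k / (k ! : ℝ) ^ 2 :=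
    (Real.summable_pow_div_factorial (z ^ 2 / 4)).of_nonneg_of_le (fun k => by positivity)
      fun k => div_le_div_of_nonneg_left (by positivity) (by positivity)
        (le_self_pow₀ (mod_cast k.factorial_pos) two_ne_zero)
  simpa only [besselI0, besselI0_term_eq] using hsum.hasSum

@[fun_prop]
lemma continuous_besselI0 : Continuous besselI0 := by
  refine continuous_iff_continuousAt.2 fun z => ?_
  have hz : Set.Icc (-(|z| + 1)) (|z| + 1) ∈ nhds z :=
    Icc_mem_nhds (by linarith [neg_abs_le z]) (by linarith [le_abs_self z])
  refine ContinuousOn.continuousAt ?_ hz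
  have hI0 : besselI0 = fun x => ∑' k : ℕ, (x ^ 2 / 4) ^ k / (k ! : ℝ) ^ 2 :=
    funext fun x => (hasSum_besselI0 x).tsum_eq.symm
  rw [hI0]
  refine continuousOn_tsum (fun k => by fun_prop) (hasSum_besselI0 (|z| + 1)).summable
    fun k x hx => ?_
  rw [Real.norm_of_nonneg (by positivity), ← sq_abs x]
  have hx' : |x| ≤ |z| + 1 := abs_le.2 hx
  gcongr

lemma hasSum_besselI0_mul_sqrt (β : ℝ) {x : ℝ} (hx : 0 ≤ x) :
    HasSum (fun k : ℕ => (β ^ 2 / 4) ^ k / (k ! : ℝ) ^ 2 * x ^ k)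
      (besselI0 (β * √x)) := by
  convert hasSum_besselI0 (β * √x) using 2 with k
  rw [mul_pow, Real.sq_sqrt hx]; ring

noncomputable def betaMoment (m k : ℕ) : ℝ := ∫ u in (-1 : ℝ)..1, u ^ (2 * m) * (1 - u ^ 2) ^ k

lemma betaMoment_zero (m : ℕ) : betaMoment m 0 = 2 / (2 * m + 1) := by
  norm_num [betaMoment, integral_pow, Odd.neg_pow (odd_two_mul_add_one m)]

/-- Integration by parts against `u ^ (2m+1) (1 - u²) ^ (k+1)`, which vanishes at `±1`. -/
lemma betaMoment_succ (m k : ℕ) :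
    (2 * m + 1) * betaMoment m (k + 1) = 2 * (k + 1) * betaMoment (m + 1) k := by
  have hderiv : ∀ u : ℝ, HasDerivAt (fun u : ℝ => u ^ (2 * m + 1) * (1 - u ^ 2) ^ (k + 1))
      ((2 * m + 1) * (u ^ (2 * m) * (1 - u ^ 2) ^ (k + 1))
        - 2 * (k + 1) * (u ^ (2 * (m + 1)) * (1 - u ^ 2) ^ k)) u := fun u => by
    refine ((hasDerivAt_pow (2 * m + 1) u).mul ((hasDerivAt_pow (k + 1) (1 - u ^ 2)).comp u
      ((hasDerivAt_pow 2 u).const_sub 1))).congr_deriv ?_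
    simp only [Function.comp_apply]
    push_cast
    ring
  have hparts := intervalIntegral.integral_eq_sub_of_hasDerivAt (a := -1) (b := 1)
    (fun u _ => hderiv u) (by apply Continuous.intervalIntegrable; fun_prop)
  rw [intervalIntegral.integral_sub (by apply Continuous.intervalIntegrable; fun_prop)
    (by apply Continuous.intervalIntegrable; fun_prop), intervalIntegral.integral_const_mul,
    intervalIntegral.integral_const_mul] at hparts
  simp only [betaMoment]
  norm_num at hparts
  linarith

lemma betaMoment_eq (m k : ℕ) :
    betaMoment m k = 2 * (2 * m)! * k ! * 4 ^ k * (k + m)! / (m ! * (2 * (k + m) + 1)! : ℝ) := by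
  induction k generalizing m with
  | zero =>
    rw [betaMoment_zero, zero_add, Nat.factorial_succ]
    push_cast [Nat.factorial_zero]
    field_simp
  | succ k ih =>
    have hrec := betaMoment_succ m k
    rw [ih (m + 1), show 2 * (m + 1) = 2 * m + 1 + 1 by ring, Nat.factorial_succ (2 * m + 1),
      Nat.factorial_succ (2 * m), Nat.factorial_succ m,
      show k + (m + 1) = k + m + 1 by ring] at hrec
    rw [show k + 1 + m = k + m + 1 by ring, Nat.factorial_succ k]
    push_cast at hrec ⊢
    field_simp at hrec ⊢
    apply mul_left_cancel₀ (show (m : ℝ) + 1 ≠ 0 by positivity)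
    linear_combination hrec

lemma hasSum_integral_besselI0_mul_cos_prod (β a : ℝ) :
    HasSum (fun p : ℕ × ℕ => (β ^ 2 / 4) ^ p.1 / (p.1 ! : ℝ) ^ 2 *
        ((-1) ^ p.2 * a ^ (2 * p.2) / (2 * p.2)!) * betaMoment p.2 p.1)
      (∫ u in (-1 : ℝ)..1, besselI0 (β * √(1 - u ^ 2)) * cos (a * u)) := by
  set F : ℕ × ℕ → ℝ → ℝ := fun p u => (β ^ 2 / 4) ^ p.1 / (p.1 ! : ℝ) ^ 2 * (1 - u ^ 2) ^ p.1 *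
    ((-1) ^ p.2 * (a * u) ^ (2 * p.2) / (2 * p.2)!)
  set B : ℕ × ℕ → ℝ := fun p => (β ^ 2 / 4) ^ p.1 / (p.1 ! : ℝ) ^ 2 * (|a| ^ (2 * p.2) / (2 * p.2)!)
  have hB : Summable B := (hasSum_besselI0 β).summable.mul_of_nonneg (Real.hasSum_cosh |a|).summable
    (fun k => by positivity) fun m => by positivity
  have hFB : ∀ p, ∀ u ∈ Set.uIoc (-1 : ℝ) 1, ‖F p u‖ ≤ B p := fun p u hu => by
    rw [Set.uIoc_of_le (by norm_num)] at hu
    have hu' : |1 - u ^ 2| ≤ 1 := abs_le.2 ⟨by nlinarith [hu.1, hu.2], by nlinarith⟩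
    have hau : |a| * |u| ≤ |a| := mul_le_of_le_one_right (abs_nonneg a) (abs_le.2 ⟨hu.1.le, hu.2⟩)
    simp only [F, B, Real.norm_eq_abs]
    rw [abs_mul, abs_mul, abs_of_nonneg (by positivity : 0 ≤ (β ^ 2 / 4) ^ p.1 / (p.1 ! : ℝ) ^ 2),
      abs_div, abs_mul, abs_pow, abs_pow, abs_pow, abs_neg, abs_one, one_pow, one_mul, Nat.abs_cast,
      abs_mul]
    calc _ ≤ (β ^ 2 / 4) ^ p.1 / (p.1 ! : ℝ) ^ 2 * 1 ^ p.1 * (|a| ^ (2 * p.2) / (2 * p.2)!) := by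
          gcongr
      _ = _ := by rw [one_pow, mul_one]
  have hmoment : ∀ p : ℕ × ℕ, ∫ u in (-1 : ℝ)..1, F p u = (β ^ 2 / 4) ^ p.1 / (p.1 ! : ℝ) ^ 2 *
      ((-1) ^ p.2 * a ^ (2 * p.2) / (2 * p.2)!) * betaMoment p.2 p.1 := fun p => by
    simp only [F, betaMoment, ← intervalIntegral.integral_const_mul]
    congr 1 with u
    ring
  simp only [← hmoment]
  refine intervalIntegral.hasSum_integral_of_dominated_convergence (fun p _ => B p)
    (fun p => by fun_prop) (fun p => .of_forall (hFB p)) (.of_forall fun _ _ => hB)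
    intervalIntegrable_const (.of_forall fun u hu => ?_)
  have hx : 0 ≤ 1 - u ^ 2 := by
    rw [Set.uIoc_of_le (by norm_num)] at hu
    nlinarith [hu.1, hu.2]
  exact (hasSum_besselI0_mul_sqrt β hx).mul (Real.hasSum_cos (a * u))
    (hB.of_norm_bounded fun p => by simpa [F, mul_assoc] using hFB p u hu)

lemma HasSum.sum_antidiagonal {α A : Type*} [AddCommMonoid α] [TopologicalSpace α]
    [ContinuousAdd α] [RegularSpace α] [AddMonoid A] [HasAntidiagonal A] {f : A × A → α} {s : α}
    (hf : HasSum f s) : HasSum (fun n => ∑ p ∈ antidiagonal n, f p) s :=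
  (HasAntidiagonal.sigmaAntidiagonalEquivProd.hasSum_iff.2 hf).sigma fun n => by
    rw [← Finset.sum_coe_sort]
    exact hasSum_fintype _

lemma besselI0_cos_coeff_eq_choose (β a : ℝ) (k m : ℕ) :
    (β ^ 2 / 4) ^ k / (k ! : ℝ) ^ 2 * ((-1) ^ m * a ^ (2 * m) / (2 * m)!) * betaMoment m k =
      2 / (2 * (k + m) + 1)! * ((k + m).choose k * ((β ^ 2) ^ k * (-a ^ 2) ^ m)) := by
  rw [betaMoment_eq, Nat.cast_choose ℝ (Nat.le_add_right k m), Nat.add_sub_cancel_left,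
    pow_mul, neg_pow, div_pow]
  field_simp
  ring

lemma hasSum_integral_besselI0_mul_cos (β a : ℝ) :
    HasSum (fun n : ℕ => 2 * (β ^ 2 - a ^ 2) ^ n / (2 * n + 1)!)
      (∫ u in (-1 : ℝ)..1, besselI0 (β * √(1 - u ^ 2)) * cos (a * u)) := by
  have h := (hasSum_integral_besselI0_mul_cos_prod β a).sum_antidiagonal
  simp only [besselI0_cos_coeff_eq_choose] at h
  convert h using 2 with n
  rw [sub_eq_add_neg, (Commute.all _ _).add_pow', mul_div_right_comm, mul_comm, Finset.sum_mul]
  refine Finset.sum_congr rfl fun p hp => ?_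
  rw [mem_antidiagonal.1 hp, nsmul_eq_mul]
  ring

lemma hasSum_sin_div {x : ℝ} (hx : x ≠ 0) :
    HasSum (fun n : ℕ => (-x ^ 2) ^ n / (2 * n + 1)!) (sin x / x) := by
  have h : HasSum (fun n : ℕ => (-1) ^ n * x ^ (2 * n + 1) / (2 * n + 1)! / x) (sin x / x) :=
    (Real.hasSum_sin x).div_const x
  convert h using 2 with n
  rw [neg_pow]
  field_simp
  ring

lemma integral_ofReal_mul_exp_neg_of_even {g : ℝ → ℝ} (hg : Continuous g)
    (hg_even : ∀ u, g (-u) = g u) (b c : ℝ) :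
    ∫ u in -c..c, (g u : ℂ) * Complex.exp (-Complex.I * ((b * u : ℝ) : ℂ)) =
      ((∫ u in -c..c, g u * cos (b * u) : ℝ) : ℂ) := by
  have hodd : ∫ u in -c..c, g u * sin (b * u) = 0 := by
    have h := intervalIntegral.integral_comp_neg (a := -c) (b := c) fun u => g u * sin (b * u)
    simp only [neg_neg, hg_even, mul_neg, sin_neg, intervalIntegral.integral_neg] at h
    linarith
  have hexp : ∀ u : ℝ, (g u : ℂ) * Complex.exp (-Complex.I * ((b * u : ℝ) : ℂ)) =
      ((g u * cos (b * u) : ℝ) : ℂ) - ((g u * sin (b * u) : ℝ) : ℂ) * Complex.I := fun u => by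
    rw [show -Complex.I * ((b * u : ℝ) : ℂ) = ((-(b * u) : ℝ) : ℂ) * Complex.I by push_cast; ring,
      Complex.exp_mul_I, ← Complex.ofReal_cos, ← Complex.ofReal_sin, cos_neg, sin_neg]
    push_cast
    ring
  simp only [hexp]
  rw [intervalIntegral.integral_sub (by apply Continuous.intervalIntegrable; fun_prop)
    (by apply Continuous.intervalIntegrable; fun_prop), intervalIntegral.integral_mul_const,
    intervalIntegral.integral_ofReal, intervalIntegral.integral_ofReal, hodd]
  simp

lemma kaiserBessel_apply_mul_of_abs_le {β τ u : ℝ} (hτ : 0 < τ) (hu : |u| ≤ 1) :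
    kaiserBessel β τ (τ * u) = besselI0 (β * √(1 - u ^ 2)) / besselI0 β := by
  rw [kaiserBessel, if_pos (by rw [abs_mul, abs_of_pos hτ]; exact mul_le_of_le_one_right hτ.le hu),
    mul_div_cancel_left₀ u hτ.ne']

lemma ftransform_kaiserBessel (β : ℝ) {τ : ℝ} (hτ : 0 < τ) (ω : ℝ) :
    ftransform (kaiserBessel β τ) ω = ((τ / besselI0 β *
      ∫ u in (-1 : ℝ)..1, besselI0 (β * √(1 - u ^ 2)) * cos (ω * τ * u) : ℝ) : ℂ) := by
  have hsupp : ∀ t ∉ Set.Icc (-τ) τ, (kaiserBessel β τ t : ℂ) *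
      Complex.exp (-Complex.I * ((ω * t : ℝ) : ℂ)) = 0 := fun t ht => by
    rw [kaiserBessel, if_neg (by rwa [abs_le, ← Set.mem_Icc]), Complex.ofReal_zero, zero_mul]
  have hsubst := intervalIntegral.smul_integral_comp_mul_left (a := -1) (b := 1)
    (fun t => (kaiserBessel β τ t : ℂ) * Complex.exp (-Complex.I * ((ω * t : ℝ) : ℂ))) τ
  rw [mul_neg, mul_one] at hsubst
  have hwindow : ∀ u ∈ Set.uIcc (-1 : ℝ) 1,
      (kaiserBessel β τ (τ * u) : ℂ) * Complex.exp (-Complex.I * ((ω * (τ * u) : ℝ) : ℂ)) =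
        ((besselI0 (β * √(1 - u ^ 2)) / besselI0 β : ℝ) : ℂ) *
          Complex.exp (-Complex.I * ((ω * τ * u : ℝ) : ℂ)) := fun u hu => by
    rw [Set.uIcc_of_le (by norm_num), Set.mem_Icc, ← abs_le] at hu
    rw [kaiserBessel_apply_mul_of_abs_le hτ hu, mul_assoc]
  rw [ftransform, ← setIntegral_eq_integral_of_forall_compl_eq_zero hsupp,
    integral_Icc_eq_integral_Ioc, ← intervalIntegral.integral_of_le (by linarith), ← hsubst,
    intervalIntegral.integral_congr hwindow,
    integral_ofReal_mul_exp_neg_of_even (by fun_prop) (fun u => by simp only [neg_sq]),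
    Complex.real_smul]
  simp only [div_mul_eq_mul_div, intervalIntegral.integral_div]
  push_cast
  ring

lemma ftransform_kaiserBessel_of_lt {β τ ω : ℝ} (hβ : 0 < β) (hτ : 0 < τ) (hω : β < |ω| * τ) :
    ftransform (kaiserBessel β τ) ω =
      (((2 * τ / besselI0 β) *
        (sin √(ω ^ 2 * τ ^ 2 - β ^ 2) / √(ω ^ 2 * τ ^ 2 - β ^ 2)) : ℝ) : ℂ) := by
  have hpos : 0 < ω ^ 2 * τ ^ 2 - β ^ 2 := by nlinarith [sq_abs ω]
  have hsum := (hasSum_sin_div (Real.sqrt_pos.2 hpos).ne').mul_left 2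
  rw [Real.sq_sqrt hpos.le, neg_sub] at hsum
  rw [ftransform_kaiserBessel β hτ ω,
    (hasSum_integral_besselI0_mul_cos β (ω * τ)).unique (by simpa only [mul_pow, mul_div_assoc])]
  push_cast
  ring

/-- For `|ω|τ > β`, the Fourier transform of the Kaiser–Bessel window is
`K̂_{β,τ}(ω) = (2τ/I₀(β)) · sin(√(ω²τ² − β²)) / √(ω²τ² − β²)`; in particular, for
`β = Sτ` with `S > 0` and `ω = ℓ` with `|ℓ| > S`,
`K̂_{Sτ,τ}(ℓ) = (2/I₀(Sτ)) · sin(τ√(ℓ² − S²)) / √(ℓ² − S²)`. -/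
theorem kaiserBessel_fourier_high (β τ ω : ℝ) (hβ : 0 < β) (hτ : 0 < τ)
    (hω : β < |ω| * τ) :
    ftransform (kaiserBessel β τ) ω =
      (((2 * τ / besselI0 β) *
        (Real.sin (Real.sqrt (ω ^ 2 * τ ^ 2 - β ^ 2)) /
          Real.sqrt (ω ^ 2 * τ ^ 2 - β ^ 2)) : ℝ) : ℂ) ∧
    ∀ S : ℝ, 0 < S → ∀ ℓ : ℝ, S < |ℓ| →
      ftransform (kaiserBessel (S * τ) τ) ℓ =
        (((2 / besselI0 (S * τ)) *
          (Real.sin (τ * Real.sqrt (ℓ ^ 2 - S ^ 2)) /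
            Real.sqrt (ℓ ^ 2 - S ^ 2)) : ℝ) : ℂ) := by
  refine ⟨ftransform_kaiserBessel_of_lt hβ hτ hω, fun S hS ℓ hℓ => ?_⟩
  have hsqrt : √(ℓ ^ 2 * τ ^ 2 - (S * τ) ^ 2) = τ * √(ℓ ^ 2 - S ^ 2) := by
    rw [show ℓ ^ 2 * τ ^ 2 - (S * τ) ^ 2 = τ ^ 2 * (ℓ ^ 2 - S ^ 2) by ring,
      Real.sqrt_mul (sq_nonneg τ), Real.sqrt_sq hτ.le]
  rw [ftransform_kaiserBessel_of_lt (mul_pos hS hτ) hτ (mul_lt_mul_of_pos_right hℓ hτ), hsqrt]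
  congr 1
  field_simp
end

section
/- Let m, P be positive integers with m ≤ P, α ∈ ℝ, M a positive integer, R ∈ ℤ, and x ∈ ℂ^m. Define p, q ∈ ℂ^{2P} by p_i := x_i e^{−ιi(πα/M)(i−2R)} for 0 ≤ i < m and p_i := 0 for m ≤ i < 2P, and q_i := e^{ι(πα/M)i²} for 0 ≤ i < P and q_i := e^{ι(πα/M)(2P−i)²} for P ≤ i < 2P. Then for every I ∈ {0, 1, …, P−1}, Σ_{i=0}^{m−1} x_i e^{−ιi·2π(I−R)α/M} = e^{−ι(πα/M)I²} Σ_{i=0}^{2P−1} p_i q_{(I−i) mod 2P}. -/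
open Real

/-- The Chirp-Z transform as a circular convolution: with
`p_i := x_i e^{−ιi(πα/M)(i−2R)}` (zero-padded to length `2P`) and
`q_i := e^{ι(πα/M)i²}` for `0 ≤ i < P`, `q_i := e^{ι(πα/M)(2P−i)²}` for `P ≤ i < 2P`,
for every `I ∈ {0,…,P−1}`:
`Σ_{i<m} x_i e^{−ιi·2π(I−R)α/M} = e^{−ι(πα/M)I²} Σ_{i<2P} p_i q_{(I−i) mod 2P}`. -/
theorem czt_circular_convolution (m P M : ℕ) (hm : 0 < m) (hP : 0 < P) (hmP : m ≤ P)
    (hM : 0 < M) (α : ℝ) (R : ℤ) (x : Fin m → ℂ) (p q : ℕ → ℂ)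
    (hp : ∀ i : ℕ, i < 2 * P → p i =
      if h : i < m then
        x ⟨i, h⟩ * Complex.exp (-Complex.I *
          (((i : ℝ) * ((π * α / M) * ((i : ℝ) - 2 * (R : ℝ))) : ℝ) : ℂ))
      else 0)
    (hq : ∀ i : ℕ, i < 2 * P → q i =
      if i < P then
        Complex.exp (Complex.I * (((π * α / M) * (i : ℝ) ^ 2 : ℝ) : ℂ))
      else
        Complex.exp (Complex.I * (((π * α / M) * ((2 * P - i : ℕ) : ℝ) ^ 2 : ℝ) : ℂ))) :
    ∀ I : ℕ, I < P →
      ∑ i : Fin m, x i * Complex.exp (-Complex.I *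
          (((i : ℝ) * (2 * π * ((I : ℝ) - (R : ℝ)) * α / M) : ℝ) : ℂ)) =
        Complex.exp (-Complex.I * (((π * α / M) * (I : ℝ) ^ 2 : ℝ) : ℂ)) *
          ∑ i ∈ Finset.range (2 * P),
            p i * q ((((I : ℤ) - (i : ℤ)) % ((2 * P : ℕ) : ℤ)).toNat) := by
  intro I hI
  have hm2P : m ≤ 2 * P := by omega
  rw [Finset.mul_sum]
  rw [← Finset.sum_subset (Finset.range_subset_range.mpr hm2P)
      (fun i hi hni => by
        rw [hp i (Finset.mem_range.mp hi)]
        rw [dif_neg (by simpa using hni)]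
        ring)]
  rw [Finset.sum_range (fun i => Complex.exp (-Complex.I * (((π * α / M) * (I : ℝ) ^ 2 : ℝ) : ℂ)) *
        (p i * q ((((I : ℤ) - (i : ℤ)) % ((2 * P : ℕ) : ℤ)).toNat)))]
  apply Finset.sum_congr rfl
  intro i _
  have hilt : (i : ℕ) < m := i.isLt
  rw [hp i (by omega), dif_pos hilt]
  by_cases hle : (i : ℕ) ≤ I
  · have harg : ((((I : ℤ) - (i : ℤ)) % ((2 * P : ℕ) : ℤ)).toNat) = I - (i : ℕ) := by
      rw [Int.emod_eq_of_lt (by omega) (by push_cast; omega)]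
      omega
    rw [harg, hq _ (by omega), if_pos (by omega)]
    rw [show x ⟨(i:ℕ), hilt⟩ = x i from congrArg x (Fin.ext rfl)]
    have key : (-Complex.I * ((((i:ℕ) : ℝ) * (2 * π * ((I : ℝ) - (R : ℝ)) * α / M) : ℝ) : ℂ))
        = (-Complex.I * (((π * α / M) * (I : ℝ) ^ 2 : ℝ) : ℂ))
          + (-Complex.I * ((((i:ℕ) : ℝ) * ((π * α / M) * (((i:ℕ) : ℝ) - 2 * (R : ℝ))) : ℝ) : ℂ))
          + (Complex.I * (((π * α / M) * ((I - (i:ℕ) : ℕ) : ℝ) ^ 2 : ℝ) : ℂ)) := by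
      push_cast [Nat.cast_sub hle]
      ring
    rw [key, Complex.exp_add, Complex.exp_add]
    ring
  · have harg : ((((I : ℤ) - (i : ℤ)) % ((2 * P : ℕ) : ℤ)).toNat) = 2 * P + I - (i : ℕ) := by
      have : ((I : ℤ) - (i : ℤ)) % ((2 * P : ℕ) : ℤ)
          = ((I : ℤ) - (i : ℤ) + ((2 * P : ℕ) : ℤ) * 1) % ((2 * P : ℕ) : ℤ) := by
        rw [Int.add_mul_emod_self_left]
      rw [this, Int.emod_eq_of_lt (by push_cast; omega) (by push_cast; omega)]
      omega
    rw [harg, hq _ (by omega), if_neg (by omega)]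
    have h2 : 2 * P - (2 * P + I - (i : ℕ)) = (i : ℕ) - I := by omega
    rw [h2]
    rw [show x ⟨(i:ℕ), hilt⟩ = x i from congrArg x (Fin.ext rfl)]
    have key : (-Complex.I * ((((i:ℕ) : ℝ) * (2 * π * ((I : ℝ) - (R : ℝ)) * α / M) : ℝ) : ℂ))
        = (-Complex.I * (((π * α / M) * (I : ℝ) ^ 2 : ℝ) : ℂ))
          + (-Complex.I * ((((i:ℕ) : ℝ) * ((π * α / M) * (((i:ℕ) : ℝ) - 2 * (R : ℝ))) : ℝ) : ℂ))
          + (Complex.I * (((π * α / M) * (((i:ℕ) - I : ℕ) : ℝ) ^ 2 : ℝ) : ℂ)) := by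
      push_cast [Nat.cast_sub (by omega : I ≤ (i:ℕ))]
      ring
    rw [key, Complex.exp_add, Complex.exp_add]
    ring
end
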